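/- Let A be a commutative ℚ-algebra, k ≥ 2 an integer, and M₁, …, M_{k−1} : A × A → A additive bilinear maps satisfying the recursive associativity conditions δ(M_l) = (1/2) Σ_{j=1}^{l−1} [M_j, M_{l−j}] for every 1 ≤ l ≤ k−1 (so in particular δM₁ = 0). Then R_k := (1/2) Σ_{l=1}^{k−1} [M_l, M_{k−l}] is a Hochschild cocycle: δ(R_k) = 0, where δ on trilinear maps is the Hochschild coboundary. This is the necessary consistency condition for solving δ(M_k) = R_k at the next order. -/

import Mathlib

/-- Hochschild coboundary of a bilinear map:
`δM(f,g,h) = f·M(g,h) − M(f·g,h) + M(f,g·h) − M(f,g)·h`. -/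
def hochschildδ₂ {A : Type*} [CommRing A] (M : A → A → A) : A → A → A → A :=
  fun f g h => f * M g h - M (f * g) h + M f (g * h) - M f g * h

/-- Hochschild coboundary of a trilinear map:
`δN(f,g,h,k) = f·N(g,h,k) − N(f·g,h,k) + N(f,g·h,k) − N(f,g,h·k) + N(f,g,h)·k`. -/
def hochschildδ₃ {A : Type*} [CommRing A] (N : A → A → A → A) : A → A → A → A → A :=
  fun f g h k => f * N g h k - N (f * g) h k + N f (g * h) k - N f g (h * k) + N f g h * k

/-- Gerstenhaber bracket of two bilinear maps:
`[M,N](f,g,h) = M(N(f,g),h) − M(f,N(g,h)) + N(M(f,g),h) − N(f,M(g,h))`. -/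
def gerstenhaber {A : Type*} [CommRing A] (M N : A → A → A) : A → A → A → A :=
  fun f g h => M (N f g) h - M f (N g h) + N (M f g) h - N f (M g h)

/-!
The identity `δ[M, N] = -([δM, N] + [δN, M])` turns `δR_k` into `-∑_l [δM_l, M_{k-l}]`.
Substituting the recursive conditions `δM_l = R_l` rewrites this as
`-½ ∑_{a+b+c=k} [[M_a, M_b], M_c]`. The set of compositions of `k` into three positive parts is
invariant under cyclic rotation, so this sum is a third of the sum of the cyclic Jacobi expressions
`[[M_a, M_b], M_c] + [[M_b, M_c], M_a] + [[M_c, M_a], M_b]`, each of which vanishes.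
-/

open Finset

section Compositions

def tripleCompositions (k : ℕ) : Finset (ℕ × ℕ × ℕ) :=
  (Ico 1 k ×ˢ Ico 1 k ×ˢ Ico 1 k).filter fun x => x.1 + x.2.1 + x.2.2 = k

lemma mem_tripleCompositions {k : ℕ} {x : ℕ × ℕ × ℕ} :
    x ∈ tripleCompositions k ↔ 0 < x.1 ∧ 0 < x.2.1 ∧ 0 < x.2.2 ∧ x.1 + x.2.1 + x.2.2 = k := by
  simp only [tripleCompositions, mem_filter, mem_product, mem_Ico]
  omega

variable {E : Type*} [AddCommGroup E]

lemma sum_Ico_one_sub_swap (k : ℕ) (F : ℕ → ℕ → E) :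
    ∑ l ∈ Ico 1 k, F (k - l) l = ∑ l ∈ Ico 1 k, F l (k - l) := by
  refine sum_nbij' (k - ·) (k - ·) ?_ ?_ ?_ ?_ ?_ <;> intro l hl <;> simp only [mem_Ico] at hl
  all_goals first | (simp only [mem_Ico]; omega) | rw [Nat.sub_sub_self hl.2.le]

lemma sum_tripleCompositions_rotate (k : ℕ) (G : ℕ → ℕ → ℕ → E) :
    ∑ x ∈ tripleCompositions k, G x.1 x.2.1 x.2.2
      = ∑ x ∈ tripleCompositions k, G x.2.1 x.2.2 x.1 :=
  sum_nbij' (fun x => (x.2.2, x.1, x.2.1)) (fun x => (x.2.1, x.2.2, x.1))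
    (fun x hx => by simp only [mem_tripleCompositions] at hx ⊢; omega)
    (fun x hx => by simp only [mem_tripleCompositions] at hx ⊢; omega)
    (fun _ _ => rfl) (fun _ _ => rfl) (fun _ _ => rfl)

lemma sum_Ico_sum_Ico_eq_sum_tripleCompositions (k : ℕ) (G : ℕ → ℕ → ℕ → E) :
    ∑ l ∈ Ico 1 k, ∑ a ∈ Ico 1 l, G a (l - a) (k - l)
      = ∑ x ∈ tripleCompositions k, G x.1 x.2.1 x.2.2 := by
  rw [sum_sigma']
  refine sum_nbij' (fun p => (p.2, p.1 - p.2, k - p.1)) (fun x => ⟨x.1 + x.2.1, x.1⟩)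
    ?_ ?_ ?_ ?_ ?_
  · rintro ⟨l, a⟩ hp
    simp only [mem_sigma, mem_Ico, mem_tripleCompositions] at hp ⊢
    omega
  · rintro ⟨a, b, c⟩ hx
    simp only [mem_sigma, mem_Ico, mem_tripleCompositions] at hx ⊢
    omega
  · rintro ⟨l, a⟩ hp
    simp only [mem_sigma, mem_Ico] at hp
    simp only [Sigma.mk.injEq, heq_eq_eq, and_true]
    omega
  · rintro ⟨a, b, c⟩ hx
    simp only [mem_tripleCompositions] at hx
    simp only [Prod.mk.injEq, true_and]
    omega
  · rintro ⟨l, a⟩ _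
    rfl

lemma sum_tripleCompositions_eq_zero [Module ℚ E] (k : ℕ) (G : ℕ → ℕ → ℕ → E)
    (hG : ∀ x ∈ tripleCompositions k,
      G x.1 x.2.1 x.2.2 + G x.2.1 x.2.2 x.1 + G x.2.2 x.1 x.2.1 = 0) :
    ∑ x ∈ tripleCompositions k, G x.1 x.2.1 x.2.2 = 0 := by
  have h3 : (3 : ℚ) • ∑ x ∈ tripleCompositions k, G x.1 x.2.1 x.2.2 = 0 := by
    rw [← sum_eq_zero hG, sum_add_distrib, sum_add_distrib, ← sum_tripleCompositions_rotate,
      sum_tripleCompositions_rotate k fun a b c => G c a b]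
    module
  exact (smul_eq_zero.mp h3).resolve_left three_ne_zero

end Compositions

section Cochains

structure IsBiadditive {α : Type*} [Add α] (M : α → α → α) : Prop where
  add_left : ∀ x y z, M (x + y) z = M x z + M y z
  add_right : ∀ x y z, M x (y + z) = M x y + M x z

lemma IsBiadditive.sub_left {α : Type*} [AddGroup α] {M : α → α → α} (hM : IsBiadditive M)
    (x y z : α) : M (x - y) z = M x z - M y z :=
  (AddMonoidHom.mk' (M · z) (hM.add_left · · z)).map_sub x y

lemma IsBiadditive.sub_right {α : Type*} [AddGroup α] {M : α → α → α} (hM : IsBiadditive M)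
    (x y z : α) : M x (y - z) = M x y - M x z :=
  (AddMonoidHom.mk' (M x) (hM.add_right x)).map_sub y z

variable {A : Type*} [CommRing A]

/-- The Gerstenhaber bracket `[T, B]` of a 3-cochain with a 2-cochain, in the sign convention in
which `gerstenhaber M N = [M, N]`. -/
def gerstenhaber₃₂ (T : A → A → A → A) (B : A → A → A) : A → A → A → A → A :=
  fun f g h j => T (B f g) h j - T f (B g h) j + T f g (B h j) - B (T f g h) j - B f (T g h j)

lemma hochschildδ₃_gerstenhaber {M N : A → A → A} (hM : IsBiadditive M) (hN : IsBiadditive N) :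
    hochschildδ₃ (gerstenhaber M N)
      = -(gerstenhaber₃₂ (hochschildδ₂ M) N + gerstenhaber₃₂ (hochschildδ₂ N) M) := by
  funext f g h j
  simp only [hochschildδ₃, hochschildδ₂, gerstenhaber, gerstenhaber₃₂, Pi.neg_apply,
    Pi.add_apply, hM.add_left, hM.add_right, hM.sub_left, hM.sub_right, hN.add_left,
    hN.add_right, hN.sub_left, hN.sub_right]
  ring

lemma gerstenhaber₃₂_gerstenhaber_cyclic {B₁ B₂ B₃ : A → A → A} (h₁ : IsBiadditive B₁)
    (h₂ : IsBiadditive B₂) (h₃ : IsBiadditive B₃) :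
    gerstenhaber₃₂ (gerstenhaber B₁ B₂) B₃ + gerstenhaber₃₂ (gerstenhaber B₂ B₃) B₁
      + gerstenhaber₃₂ (gerstenhaber B₃ B₁) B₂ = 0 := by
  funext f g h j
  simp only [gerstenhaber, gerstenhaber₃₂, Pi.add_apply, Pi.zero_apply, h₁.add_left,
    h₁.add_right, h₁.sub_left, h₁.sub_right, h₂.add_left, h₂.add_right, h₂.sub_left,
    h₂.sub_right, h₃.add_left, h₃.add_right, h₃.sub_left, h₃.sub_right]
  ring

def hochschildδ₃AddHom : (A → A → A → A) →+ (A → A → A → A → A) :=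
  AddMonoidHom.mk' hochschildδ₃ fun N N' => by
    funext f g h j
    simp only [hochschildδ₃, Pi.add_apply]
    ring

def IsBiadditive.gerstenhaber₃₂AddHom {B : A → A → A} (hB : IsBiadditive B) :
    (A → A → A → A) →+ (A → A → A → A → A) :=
  AddMonoidHom.mk' (gerstenhaber₃₂ · B) fun T T' => by
    funext f g h j
    simp only [gerstenhaber₃₂, Pi.add_apply, hB.add_left, hB.add_right]
    ring

variable [Algebra ℚ A]

lemma hochschildδ₃_rat_smul_sum {ι : Type*} (s : Finset ι) (c : ℚ) (N : ι → A → A → A → A) :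
    hochschildδ₃ (c • ∑ i ∈ s, N i) = c • ∑ i ∈ s, hochschildδ₃ (N i) :=
  (map_rat_smul (hochschildδ₃AddHom (A := A)) c _).trans
    (congrArg (c • ·) (map_sum hochschildδ₃AddHom N s))

lemma IsBiadditive.gerstenhaber₃₂_rat_smul_sum {B : A → A → A} (hB : IsBiadditive B)
    {ι : Type*} (s : Finset ι) (c : ℚ) (T : ι → A → A → A → A) :
    gerstenhaber₃₂ (c • ∑ i ∈ s, T i) B = c • ∑ i ∈ s, gerstenhaber₃₂ (T i) B :=
  (map_rat_smul hB.gerstenhaber₃₂AddHom c _).trans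
    (congrArg (c • ·) (map_sum hB.gerstenhaber₃₂AddHom T s))

/-- The cochain `R_k` of the paper. -/
def deformationObstruction (M : ℕ → A → A → A) (k : ℕ) : A → A → A → A :=
  (1 / 2 : ℚ) • ∑ l ∈ Ico 1 k, gerstenhaber (M l) (M (k - l))

variable {M : ℕ → A → A → A} {k : ℕ}

lemma hochschildδ₃_deformationObstruction (hM : ∀ l ∈ Ico 1 k, IsBiadditive (M l)) :
    hochschildδ₃ (deformationObstruction M k)
      = -∑ l ∈ Ico 1 k, gerstenhaber₃₂ (hochschildδ₂ (M l)) (M (k - l)) := by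
  have hM' : ∀ l ∈ Ico 1 k, IsBiadditive (M (k - l)) := fun l hl =>
    hM _ (by simp only [mem_Ico] at hl ⊢; omega)
  rw [deformationObstruction, hochschildδ₃_rat_smul_sum,
    sum_congr rfl fun l hl => hochschildδ₃_gerstenhaber (hM l hl) (hM' l hl), sum_neg_distrib,
    sum_add_distrib, sum_Ico_one_sub_swap k fun a b => gerstenhaber₃₂ (hochschildδ₂ (M b)) (M a)]
  module

lemma sum_gerstenhaber₃₂_hochschildδ₂ (hM : ∀ l ∈ Ico 1 k, IsBiadditive (M l))
    (hrec : ∀ l ∈ Ico 1 k, hochschildδ₂ (M l) = deformationObstruction M l) :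
    ∑ l ∈ Ico 1 k, gerstenhaber₃₂ (hochschildδ₂ (M l)) (M (k - l))
      = (1 / 2 : ℚ) • ∑ x ∈ tripleCompositions k,
          gerstenhaber₃₂ (gerstenhaber (M x.1) (M x.2.1)) (M x.2.2) := by
  rw [← sum_Ico_sum_Ico_eq_sum_tripleCompositions k
    fun a b c => gerstenhaber₃₂ (gerstenhaber (M a) (M b)) (M c), smul_sum]
  refine sum_congr rfl fun l hl => ?_
  rw [hrec l hl, deformationObstruction,
    (hM (k - l) (by simp only [mem_Ico] at hl ⊢; omega)).gerstenhaber₃₂_rat_smul_sum]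

lemma sum_tripleCompositions_gerstenhaber₃₂_gerstenhaber
    (hM : ∀ l ∈ Ico 1 k, IsBiadditive (M l)) :
    ∑ x ∈ tripleCompositions k, gerstenhaber₃₂ (gerstenhaber (M x.1) (M x.2.1)) (M x.2.2) = 0 := by
  refine sum_tripleCompositions_eq_zero k
    (fun a b c => gerstenhaber₃₂ (gerstenhaber (M a) (M b)) (M c)) fun x hx => ?_
  rw [mem_tripleCompositions] at hx
  exact gerstenhaber₃₂_gerstenhaber_cyclic (hM _ (mem_Ico.mpr (by omega)))
    (hM _ (mem_Ico.mpr (by omega))) (hM _ (mem_Ico.mpr (by omega)))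

theorem hochschildδ₃_deformationObstruction_eq_zero (hM : ∀ l ∈ Ico 1 k, IsBiadditive (M l))
    (hrec : ∀ l ∈ Ico 1 k, hochschildδ₂ (M l) = deformationObstruction M l) :
    hochschildδ₃ (deformationObstruction M k) = 0 := by
  rw [hochschildδ₃_deformationObstruction hM, sum_gerstenhaber₃₂_hochschildδ₂ hM hrec,
    sum_tripleCompositions_gerstenhaber₃₂_gerstenhaber hM, smul_zero, neg_zero]

end Cochains

theorem Rk_is_cocycle_general {A : Type*} [CommRing A] [Algebra ℚ A] (k : ℕ)
    (M : ℕ → A → A → A)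
    (haddl : ∀ l, 1 ≤ l → l ≤ k - 1 → ∀ x y z : A, M l (x + y) z = M l x z + M l y z)
    (haddr : ∀ l, 1 ≤ l → l ≤ k - 1 → ∀ x y z : A, M l x (y + z) = M l x y + M l x z)
    (hrec : ∀ l, 1 ≤ l → l ≤ k - 1 → ∀ f g h : A,
      hochschildδ₂ (M l) f g h
        = (1 / 2 : ℚ) • ∑ j ∈ Finset.Ico 1 l, gerstenhaber (M j) (M (l - j)) f g h)
    (R : A → A → A → A)
    (hR : ∀ f g h : A,
      R f g h = (1 / 2 : ℚ) • ∑ l ∈ Finset.Ico 1 k, gerstenhaber (M l) (M (k - l)) f g h) :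
    ∀ f g h j : A, hochschildδ₃ R f g h j = 0 := by
  have hM : ∀ l ∈ Ico 1 k, IsBiadditive (M l) := fun l hl =>
    have hl' := mem_Ico.mp hl
    ⟨haddl l hl'.1 (by omega), haddr l hl'.1 (by omega)⟩
  have hδM : ∀ l ∈ Ico 1 k, hochschildδ₂ (M l) = deformationObstruction M l := fun l hl => by
    have hl' := mem_Ico.mp hl
    funext f g h
    simp only [hrec l hl'.1 (by omega), deformationObstruction, Pi.smul_apply, Finset.sum_apply]
  have hR' : R = deformationObstruction M k := by
    funext f g h
    simp only [hR, deformationObstruction, Pi.smul_apply, Finset.sum_apply]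
  intro f g h j
  rw [hR', hochschildδ₃_deformationObstruction_eq_zero hM hδM]
  rfl

/-- **R_k is a Hochschild cocycle:** if M₁, …, M_{k−1} satisfy the recursive
associativity conditions δ(M_l) = (1/2)∑_{j=1}^{l−1} [M_j, M_{l−j}] for 1 ≤ l ≤ k−1,
then R_k = (1/2)∑_{l=1}^{k−1} [M_l, M_{k−l}] satisfies δ(R_k) = 0. -/
theorem Rk_is_cocycle {A : Type*} [CommRing A] [Algebra ℚ A] (k : ℕ) (hk : 2 ≤ k)
    (M : ℕ → A → A → A)
    (haddl : ∀ l, 1 ≤ l → l ≤ k - 1 → ∀ x y z : A, M l (x + y) z = M l x z + M l y z)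
    (haddr : ∀ l, 1 ≤ l → l ≤ k - 1 → ∀ x y z : A, M l x (y + z) = M l x y + M l x z)
    (hrec : ∀ l, 1 ≤ l → l ≤ k - 1 → ∀ f g h : A,
      hochschildδ₂ (M l) f g h
        = (1 / 2 : ℚ) • ∑ j ∈ Finset.Ico 1 l, gerstenhaber (M j) (M (l - j)) f g h)
    (R : A → A → A → A)
    (hR : ∀ f g h : A,
      R f g h = (1 / 2 : ℚ) • ∑ l ∈ Finset.Ico 1 k, gerstenhaber (M l) (M (k - l)) f g h) :
    ∀ f g h j : A, hochschildδ₃ R f g h j = 0 :=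
  Rk_is_cocycle_general k M haddl haddr hrec R hR
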